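/- If a graph G satisfies α(G) > |V(G)|/2, then |core(G)| > |N(core(G))|. -/

import Mathlib

/-!
For a nonempty family `F` of maximum stable sets with `X = ⋂ F` and `Y = ⋃ F`, the inequality
`2 α(G) ≤ |X| + |Y|` survives adding one more maximum stable set `S`: `X ∪ (S \ N(X))` is stable,
so `|X \ S| ≤ |S ∩ N(X)|`, and `N(X)` misses `Y` because every member of `F` is a stable superset
of `X`, whence `|X \ S| ≤ |S \ Y|`. For the family of all maximum stable sets this reads
`2 α(G) ≤ |core G| + |corona|`, the corona being their union; as `N(core G)` is disjoint from the
corona, `|N(core G)| + |corona| ≤ |V| < 2 α(G)`.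
-/

open Finset

variable {V : Type*} [Fintype V] [DecidableEq V]

def stable (G : SimpleGraph V) (S : Finset V) : Prop :=
  ∀ a ∈ S, ∀ b ∈ S, ¬ G.Adj a b

open Classical in
noncomputable def nbhd (G : SimpleGraph V) (A : Finset V) : Finset V :=
  Finset.univ.filter fun v => ∃ a ∈ A, G.Adj a v

open Classical in
noncomputable def alpha (G : SimpleGraph V) : ℕ :=
  Finset.univ.sup fun S : Finset V => if stable G S then S.card else 0

def maxStable (G : SimpleGraph V) (S : Finset V) : Prop :=
  stable G S ∧ S.card = alpha G

open Classical in
noncomputable def core (G : SimpleGraph V) : Finset V :=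
  Finset.univ.filter fun v => ∀ S : Finset V, maxStable G S → v ∈ S

def isolated (G : SimpleGraph V) (v : V) : Prop := ∀ w, ¬ G.Adj v w

open Classical in
noncomputable def isol (G : SimpleGraph V) : Finset V :=
  Finset.univ.filter fun v => isolated G v

section

variable {G : SimpleGraph V}

omit [DecidableEq V] in
theorem mem_nbhd {A : Finset V} {v : V} : v ∈ nbhd G A ↔ ∃ a ∈ A, G.Adj a v := by
  classical
  simp [nbhd]

omit [Fintype V] [DecidableEq V] in
theorem stable.mono {S T : Finset V} (hS : stable G S) (hTS : T ⊆ S) : stable G T :=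
  fun a ha b hb => hS a (hTS ha) b (hTS hb)

omit [DecidableEq V] in
theorem card_le_alpha {S : Finset V} (hS : stable G S) : #S ≤ alpha G := by
  classical
  have := le_sup (f := fun S : Finset V => if stable G S then #S else 0) (mem_univ S)
  rwa [if_pos hS] at this

omit [DecidableEq V] in
theorem exists_maxStable (G : SimpleGraph V) : ∃ S, maxStable G S := by
  classical
  obtain ⟨S, -, hS⟩ := exists_mem_eq_sup (univ : Finset (Finset V)) univ_nonempty
    (fun S : Finset V => if stable G S then #S else 0)
  by_cases h : stable G S
  · exact ⟨S, h, by rw [alpha, hS, if_pos h]⟩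
  · exact ⟨∅, by simp [stable], by rw [alpha, hS, if_neg h, card_empty]⟩

omit [DecidableEq V] in
theorem disjoint_nbhd_of_stable {X T : Finset V} (hT : stable G T) (hXT : X ⊆ T) :
    Disjoint (nbhd G X) T :=
  disjoint_left.mpr fun _ hv hvT =>
    let ⟨a, ha, hadj⟩ := mem_nbhd.mp hv
    hT a (hXT ha) _ hvT hadj

theorem stable.union_sdiff_nbhd {X S : Finset V} (hX : stable G X) (hS : stable G S) :
    stable G (X ∪ (S \ nbhd G X)) := by
  intro a ha b hb hab
  simp only [mem_union, mem_sdiff, mem_nbhd, not_exists, not_and] at ha hb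
  rcases ha with ha | ⟨haS, haN⟩ <;> rcases hb with hb | ⟨hbS, hbN⟩
  · exact hX a ha b hb hab
  · exact hbN a ha hab
  · exact haN b hb hab.symm
  · exact hS a haS b hbS hab

theorem card_sdiff_le_card_inter_nbhd {X S : Finset V} (hX : stable G X)
    (hS : maxStable G S) : #(X \ S) ≤ #(S ∩ nbhd G X) := by
  have hT : #(X ∪ (S \ nbhd G X)) ≤ #S := hS.2 ▸ card_le_alpha (hX.union_sdiff_nbhd hS.1)
  have hXS : X ∩ (S \ nbhd G X) = X ∩ S := by
    have hXN := disjoint_nbhd_of_stable hX subset_rfl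
    ext v
    simp only [mem_inter, mem_sdiff]
    exact ⟨fun h => ⟨h.1, h.2.1⟩, fun h => ⟨h.1, h.2, fun hN => disjoint_left.mp hXN hN h.1⟩⟩
  have e₀ := card_union_add_card_inter X (S \ nbhd G X)
  have e₁ := card_sdiff_add_card_inter S (nbhd G X)
  have e₂ := card_inter_add_card_sdiff X S
  rw [hXS] at e₀
  omega

theorem two_mul_alpha_le_card_inter_add_card_union {X Y S : Finset V} (hX : stable G X)
    (hXY : Disjoint (nbhd G X) Y) (hS : maxStable G S) (h : 2 * alpha G ≤ #X + #Y) :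
    2 * alpha G ≤ #(S ∩ X) + #(S ∪ Y) := by
  have hexch : #(X \ S) ≤ #(S \ Y) :=
    (card_sdiff_le_card_inter_nbhd hX hS).trans <| card_le_card fun v hv =>
      mem_sdiff.mpr ⟨(mem_inter.mp hv).1, disjoint_left.mp hXY (mem_inter.mp hv).2⟩
  have e₁ := card_inter_add_card_sdiff X S
  have e₂ := card_inter_add_card_sdiff S Y
  have e₃ := card_union_add_card_inter S Y
  rw [inter_comm] at e₁
  have := hS.2
  omega

theorem two_mul_alpha_le_card_inf_add_card_sup {F : Finset (Finset V)} (hF : F.Nonempty)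
    (hmax : ∀ S ∈ F, maxStable G S) : 2 * alpha G ≤ #(F.inf id) + #(F.sup id) := by
  induction hF using Nonempty.cons_induction with
  | singleton S =>
    have := (hmax S (mem_singleton_self S)).2
    simp only [inf_singleton, sup_singleton, id]
    omega
  | cons S F hS hF ih =>
    have hmax' : ∀ T ∈ F, maxStable G T := fun T hT => hmax T (mem_cons_of_mem hT)
    obtain ⟨T₀, hT₀⟩ := hF
    have hX : stable G (F.inf id) := (hmax' T₀ hT₀).1.mono (inf_le hT₀)
    have hXY : Disjoint (nbhd G (F.inf id)) (F.sup id) :=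
      Finset.disjoint_sup_right.mpr fun T hT => disjoint_nbhd_of_stable (hmax' T hT).1 (inf_le hT)
    rw [inf_cons, sup_cons]
    exact two_mul_alpha_le_card_inter_add_card_union hX hXY (hmax S (mem_cons_self S F))
      (ih hmax')

open Classical in
noncomputable def maxStableSets (G : SimpleGraph V) : Finset (Finset V) :=
  univ.filter (maxStable G)

omit [DecidableEq V] in
theorem mem_maxStableSets {S : Finset V} : S ∈ maxStableSets G ↔ maxStable G S := by
  classical
  simp [maxStableSets]

omit [DecidableEq V] in
theorem maxStableSets_nonempty (G : SimpleGraph V) : (maxStableSets G).Nonempty :=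
  let ⟨S, hS⟩ := exists_maxStable G
  ⟨S, mem_maxStableSets.mpr hS⟩

theorem core_eq_inf_maxStableSets (G : SimpleGraph V) : core G = (maxStableSets G).inf id := by
  ext v
  simp [core, mem_inf, mem_maxStableSets]

end

theorem stmt15 (G : SimpleGraph V) (h : Fintype.card V < 2 * alpha G) :
    (nbhd G (core G)).card < (core G).card := by
  set corona := (maxStableSets G).sup id
  have hmax : ∀ S ∈ maxStableSets G, maxStable G S := fun _ => mem_maxStableSets.mp
  have hcore : 2 * alpha G ≤ #(core G) + #corona := by
    rw [core_eq_inf_maxStableSets]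
    exact two_mul_alpha_le_card_inf_add_card_sup (maxStableSets_nonempty G) hmax
  have hdisj : Disjoint (nbhd G (core G)) corona :=
    Finset.disjoint_sup_right.mpr fun S hS => disjoint_nbhd_of_stable (hmax S hS).1 <| by
      rw [core_eq_inf_maxStableSets]; exact inf_le hS
  have hcard : #(nbhd G (core G)) + #corona ≤ Fintype.card V :=
    card_union_of_disjoint hdisj ▸ card_le_univ _
  omega
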